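/- The Δ-system lemma: every uncountable family of finite sets contains an uncountable subfamily Y and a finite set r such that the intersection of any two distinct members of Y equals r. -/

import Mathlib

/-!
Induction on a bound `n` for the sizes of the sets, after passing to an uncountable family of
sets of one fixed size. If some point `a` lies in uncountably many members, remove `a` from them:
this is injective and lowers the size bound, and a Δ-system with root `r` among the trimmed sets
lifts back to one with root `insert a r`. Otherwise every point lies in only countably many
members, so each member meets only countably many others; a maximal pairwise disjoint
subfamily `Y` is then uncountable, since a countable `Y` would leave, by maximality, only
countably many members of the family.
-/

open Set

theorem Set.exists_not_countable_sep_eq {β γ : Type*} [Countable γ] {X : Set β} (f : β → γ)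
    (hX : ¬X.Countable) : ∃ c, ¬{x ∈ X | f x = c}.Countable := by
  by_contra! h
  have hcover : X ⊆ ⋃ c, {x ∈ X | f x = c} := fun x hx => mem_iUnion.mpr ⟨f x, hx, rfl⟩
  exact hX ((countable_iUnion h).mono hcover)

theorem Set.exists_maximal_pairwise_subset {β : Type*} (r : β → β → Prop) (X : Set β) :
    ∃ Y, Maximal (fun Y => Y ⊆ X ∧ Y.Pairwise r) Y :=
  zorn_subset _ fun c hc hchain =>
    ⟨⋃₀ c, ⟨sUnion_subset fun _ hs => (hc hs).1,
        (pairwise_sUnion hchain.directedOn).mpr fun _ hs => (hc hs).2⟩,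
      fun _ => subset_sUnion_of_mem⟩

namespace Finset

variable {α : Type*}

theorem exists_not_countable_pairwiseDisjoint {X : Set (Finset α)} (hX : ¬X.Countable)
    (hmem : ∀ a, {x ∈ X | a ∈ x}.Countable) :
    ∃ Y ⊆ X, ¬Y.Countable ∧ Y.PairwiseDisjoint id := by
  obtain ⟨Y, hY⟩ := exists_maximal_pairwise_subset Disjoint X
  refine ⟨Y, hY.prop.1, fun hYc => hX ?_, hY.prop.2⟩
  have hcover : X ⊆ Y ∪ ⋃ y ∈ Y, ⋃ a ∈ y, {x ∈ X | a ∈ x} := by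
    intro x hx
    by_cases hxY : x ∈ Y
    · exact Or.inl hxY
    obtain ⟨y, hy, hxy⟩ : ∃ y ∈ Y, ¬Disjoint x y := by
      by_contra! hdisj
      have hinsert : insert x Y ⊆ X ∧ (insert x Y).Pairwise Disjoint :=
        ⟨Set.insert_subset hx hY.prop.1, pairwise_insert.mpr
          ⟨hY.prop.2, fun y hy _ => ⟨hdisj y hy, (hdisj y hy).symm⟩⟩⟩
      exact hxY (hY.eq_of_subset hinsert (Set.subset_insert x Y) ▸ Set.mem_insert x Y)
    obtain ⟨a, hax, hay⟩ := not_disjoint_iff.mp hxy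
    exact Or.inr <| Set.mem_biUnion hy <| Set.mem_biUnion (Finset.mem_coe.mpr hay) ⟨hx, hax⟩
  exact (hYc.union <| hYc.biUnion fun y _ => y.countable_toSet.biUnion fun a _ => hmem a).mono
    hcover

variable [DecidableEq α]

def IsDeltaSystem (Y : Set (Finset α)) : Prop :=
  ∃ r, Y.Pairwise (· ∩ · = r)

theorem IsDeltaSystem.of_image_erase {a : α} {Y : Set (Finset α)} (ha : ∀ x ∈ Y, a ∈ x)
    (h : IsDeltaSystem ((·.erase a) '' Y)) : IsDeltaSystem Y := by
  obtain ⟨r, hr⟩ := h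
  refine ⟨insert a r, (((erase_injOn' a).mono ha).pairwise_image.mp hr).imp_on ?_⟩
  intro x hx y hy _ hxy
  simp only [Function.onFun, erase_inter, inter_erase, erase_idem] at hxy
  rw [← hxy, insert_erase (mem_inter.mpr ⟨ha x hx, ha y hy⟩)]

theorem exists_not_countable_isDeltaSystem_of_image_erase {a : α} {X : Set (Finset α)}
    (ha : ∀ x ∈ X, a ∈ x)
    (h : ∃ Y' ⊆ (·.erase a) '' X, ¬Y'.Countable ∧ IsDeltaSystem Y') :
    ∃ Y ⊆ X, ¬Y.Countable ∧ IsDeltaSystem Y := by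
  obtain ⟨Y', hY'X, hY', hY'delta⟩ := h
  have himage : (·.erase a) '' (X ∩ (·.erase a) ⁻¹' Y') = Y' := by
    rw [image_inter_preimage, Set.inter_eq_right.mpr hY'X]
  refine ⟨X ∩ (·.erase a) ⁻¹' Y', Set.inter_subset_left,
    fun hc => hY' (himage ▸ hc.image _), ?_⟩
  exact IsDeltaSystem.of_image_erase (fun x hx => ha x hx.1) (by rwa [himage])

theorem exists_not_countable_isDeltaSystem_of_card_le (n : ℕ) {X : Set (Finset α)}
    (hcard : ∀ x ∈ X, x.card ≤ n) (hX : ¬X.Countable) :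
    ∃ Y ⊆ X, ¬Y.Countable ∧ IsDeltaSystem Y := by
  induction n generalizing X with
  | zero => exact absurd ((countable_singleton ∅).mono fun x hx => by simpa using hcard x hx) hX
  | succ n ih =>
    by_cases hmem : ∃ a, ¬{x ∈ X | a ∈ x}.Countable
    · obtain ⟨a, ha⟩ := hmem
      have hinj : InjOn (·.erase a) {x ∈ X | a ∈ x} := (erase_injOn' a).mono fun _ hx => hx.2
      have hcard' : ∀ x ∈ (·.erase a) '' {x ∈ X | a ∈ x}, x.card ≤ n := by
        rintro _ ⟨x, hx, rfl⟩
        rw [card_erase_of_mem hx.2]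
        exact Nat.sub_le_of_le_add (hcard x hx.1)
      have himage : ¬((·.erase a) '' {x ∈ X | a ∈ x}).Countable := fun hc =>
        ha (countable_of_injective_of_countable_image hinj hc)
      obtain ⟨Y, hYX, hY⟩ :=
        exists_not_countable_isDeltaSystem_of_image_erase (fun _ hx => hx.2) (ih hcard' himage)
      exact ⟨Y, hYX.trans (sep_subset _ _), hY⟩
    · push Not at hmem
      obtain ⟨Y, hYX, hY, hdisj⟩ := exists_not_countable_pairwiseDisjoint hX hmem
      exact ⟨Y, hYX, hY, ∅, hdisj.mono' fun _ _ => disjoint_iff_inter_eq_empty.mp⟩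

end Finset

/-- The Δ-system lemma: every uncountable family of finite sets contains an uncountable
subfamily `Y` and a finite root `r` such that any two distinct members of `Y` intersect
in exactly `r`. -/
theorem delta_system_lemma {α : Type*} [DecidableEq α] (X : Set (Finset α)) (hX : ¬ X.Countable) :
    ∃ Y ⊆ X, ¬ Y.Countable ∧
      ∃ r : Finset α, ∀ x ∈ Y, ∀ y ∈ Y, x ≠ y → x ∩ y = r := by
  obtain ⟨n, hn⟩ := exists_not_countable_sep_eq Finset.card hX
  obtain ⟨Y, hYX, hY, hdelta⟩ :=
    Finset.exists_not_countable_isDeltaSystem_of_card_le n (fun x hx => hx.2.le) hn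
  exact ⟨Y, hYX.trans (sep_subset _ _), hY, hdelta⟩
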